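/- arXiv:math/0111033 — 5 statements merged into one kernel-verified Lean document; each statement's English description precedes it below -/
import Mathlib

section
/- Let n ≥ 1, let F ⊆ ℝⁿ be a finite set, and let Ω be the interior of the convex hull of F; assume Ω ≠ ∅. Let T = {z ∈ ℂⁿ : Im z ∈ Ω} be the open tube over Ω and T̄ = {z ∈ ℂⁿ : Im z ∈ convexHull ℝ F} the closed tube. If f : ℂⁿ → ℂ is continuous on T̄, bounded on T̄, and holomorphic on T, then sup_{z ∈ T̄} |f(z)| = sup_{z ∈ T̄, Im z ∈ extremePoints(convexHull ℝ F)} |f(z)|. (This is Lemma 2.2: on a tube over a bounded convex polyhedron, the supremum of a bounded holomorphic function is attained over the distinguished boundary, the tube over the extreme points of the base.) -/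
/-!
Restrict `f` to a complex line `w ↦ z + w • (y - x)` whose imaginary part runs along a
segment `[x, y]` of the base: this is a bounded holomorphic function on a horizontal strip, so
by Phragmén–Lindelöf its modulus on the segment's tube is bounded by its modulus over the
tubes of the endpoints. Hence the base points over whose tube `‖f‖ ≤ S` form a convex set, which
is also closed by continuity; containing the extreme points, it is all of the base by
Krein–Milman. Holomorphy of `f` is only given over the interior of the base, so along a line in
the boundary it is obtained as a locally uniform limit of the restrictions to lines pushed
slightly towards an interior point.
-/

open Set Filter Topology Complex

variable {E : Type*} [NormedAddCommGroup E]

theorem norm_le_on_horizontal_strip_of_bounded [NormedSpace ℂ E] {g : ℂ → E} {a b C M : ℝ}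
    (hd : DiffContOnCl ℂ g (im ⁻¹' Ioo a b)) (hM : ∀ w ∈ im ⁻¹' Ioo a b, ‖g w‖ ≤ M)
    (ha : ∀ w : ℂ, w.im = a → ‖g w‖ ≤ C) (hb : ∀ w : ℂ, w.im = b → ‖g w‖ ≤ C) {w : ℂ}
    (hwa : a ≤ w.im) (hwb : w.im ≤ b) : ‖g w‖ ≤ C := by
  refine PhragmenLindelof.horizontal_strip hd ⟨Real.pi / (b - a) - 1, by linarith, 0, ?_⟩
    ha hb hwa hwb
  refine Asymptotics.IsBigO.of_bound M (eventually_inf_principal.2 (Eventually.of_forall ?_))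
  intro w hw
  simpa using hM w hw

theorem differentiableOn_of_continuousOn_Icc_prod [NormedSpace ℂ E] [CompleteSpace E]
    {F : ℝ → ℂ → E} {U : Set ℂ} (hU : IsOpen U)
    (hF : ContinuousOn (Function.uncurry F) (Icc 0 1 ×ˢ U))
    (hFd : ∀ ε ∈ Ioc (0 : ℝ) 1, DifferentiableOn ℂ (F ε) U) :
    DifferentiableOn ℂ (F 0) U := by
  have : (𝓝[Ioc (0 : ℝ) 1] 0).NeBot := left_nhdsWithin_Ioc_neBot zero_lt_one
  have hlim : TendstoLocallyUniformlyOn F (F 0) (𝓝[Ioc (0 : ℝ) 1] 0) U := by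
    rw [tendstoLocallyUniformlyOn_iff_forall_isCompact hU]
    intro L hLU hL
    have hunif := ((isCompact_Icc.prod hL).uniformContinuousOn_of_continuous
      (hF.mono (prod_mono_right hLU))).tendstoUniformlyOn (left_mem_Icc.2 zero_le_one)
    exact fun u hu => (hunif u hu).filter_mono (nhdsWithin_mono _ Ioc_subset_Icc_self)
  exact hlim.differentiableOn (eventually_nhdsWithin_of_forall hFd) hU

variable {ι : Type*}

def tube (K : Set (ι → ℝ)) : Set (ι → ℂ) := {z | (fun j => (z j).im) ∈ K}

theorem mem_tube {K : Set (ι → ℝ)} {z : ι → ℂ} : z ∈ tube K ↔ (fun j => (z j).im) ∈ K := Iff.rfl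

theorem tube_mono {K L : Set (ι → ℝ)} (h : K ⊆ L) : tube K ⊆ tube L := fun _ hz => h hz

theorem Set.Nonempty.tube {K : Set (ι → ℝ)} (hK : K.Nonempty) : (tube K).Nonempty :=
  let ⟨p, hp⟩ := hK
  ⟨fun j => p j * I, by simpa [mem_tube] using hp⟩

theorem im_smul_add_smul (a b : ℝ) (z w : ι → ℂ) :
    (fun j => ((a • z + b • w) j).im) = a • (fun j => (z j).im) + b • fun j => (w j).im := by
  ext j
  simp

theorem forall_mem_tube_singleton_iff {p : ι → ℝ} {P : (ι → ℂ) → Prop} :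
    (∀ z ∈ tube {p}, P z) ↔ ∀ x : ι → ℝ, P fun j => x j + p j * I := by
  refine ⟨fun h x => h _ (by ext j; simp), fun h z hz => ?_⟩
  rw [mem_tube, mem_singleton_iff] at hz
  subst hz
  simpa only [re_add_im] using h fun j => (z j).re

variable {K : Set (ι → ℝ)} {f : (ι → ℂ) → E}

theorem isClosed_setOf_forall_mem_tube_norm_le (hK : IsClosed K) (hfc : ContinuousOn f (tube K))
    (S : ℝ) : IsClosed {p ∈ K | ∀ z ∈ tube {p}, ‖f z‖ ≤ S} := by
  simp_rw [forall_mem_tube_singleton_iff]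
  have hset : {p ∈ K | ∀ x : ι → ℝ, ‖f fun j => x j + p j * I‖ ≤ S} =
      ⋂ x : ι → ℝ, K ∩ (fun p => f fun j => x j + p j * I) ⁻¹' {w | ‖w‖ ≤ S} := by
    ext p
    simp [forall_and]
  rw [hset]
  refine isClosed_iInter fun x => ContinuousOn.preimage_isClosed_of_isClosed ?_ hK
    (isClosed_le continuous_norm continuous_const)
  exact hfc.comp (by fun_prop) fun p hp => by simpa [mem_tube] using hp

variable [NormedSpace ℂ E] [CompleteSpace E] [Fintype ι]

theorem differentiableOn_comp_of_mapsTo_tube (hK : Convex ℝ K) (hKi : (interior K).Nonempty)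
    (hfc : ContinuousOn f (tube K)) (hfd : DifferentiableOn ℂ f (tube (interior K)))
    {U : Set ℂ} (hU : IsOpen U) {φ : ℂ → ι → ℂ} (hφ : DifferentiableOn ℂ φ U)
    (hφK : MapsTo φ U (tube K)) : DifferentiableOn ℂ (fun w => f (φ w)) U := by
  obtain ⟨u, hu⟩ := hKi
  set c : ι → ℂ := fun j => u j * I
  have hc : (fun j => (c j).im) = u := by ext j; simp [c]
  have hpush : ∀ ε ∈ Icc (0 : ℝ) 1, ∀ w ∈ U, (1 - ε) • φ w + ε • c ∈ tube K := by
    intro ε hε w hw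
    rw [mem_tube, im_smul_add_smul, hc]
    exact hK (hφK hw) (interior_subset hu) (by linarith [hε.2]) hε.1 (by ring)
  have hpush' : ∀ ε ∈ Ioc (0 : ℝ) 1, ∀ w ∈ U, (1 - ε) • φ w + ε • c ∈ tube (interior K) := by
    intro ε hε w hw
    rw [mem_tube, im_smul_add_smul, hc]
    exact hK.combo_self_interior_mem_interior (hφK hw) hu (by linarith [hε.2]) hε.1 (by ring)
  have := differentiableOn_of_continuousOn_Icc_prod
    (F := fun ε w => f ((1 - ε) • φ w + ε • c)) hU ?_ ?_
  · simpa using this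
  · refine hfc.comp ?_ fun q hq => hpush q.1 hq.1 q.2 hq.2
    have := hφ.continuousOn.comp continuousOn_snd (mapsTo_snd_prod (s := Icc (0 : ℝ) 1))
    exact ((continuousOn_const.sub continuousOn_fst).smul this).add
      (continuousOn_fst.smul continuousOn_const)
  · intro ε hε
    exact hfd.comp ((hφ.const_smul (1 - ε)).add_const _) fun w hw => hpush' ε hε w hw

theorem norm_le_of_mem_tube_segment (hK : Convex ℝ K) (hKi : (interior K).Nonempty)
    (hfc : ContinuousOn f (tube K)) (hfd : DifferentiableOn ℂ f (tube (interior K))) {M S : ℝ}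
    (hM : ∀ z ∈ tube K, ‖f z‖ ≤ M) {x y : ι → ℝ} (hx : x ∈ K) (hy : y ∈ K)
    (hSx : ∀ z ∈ tube {x}, ‖f z‖ ≤ S) (hSy : ∀ z ∈ tube {y}, ‖f z‖ ≤ S) {z : ι → ℂ}
    (hz : z ∈ tube (segment ℝ x y)) : ‖f z‖ ≤ S := by
  rw [mem_tube, segment_eq_image'] at hz
  obtain ⟨θ, hθ, hzθ : x + θ • (y - x) = fun j => (z j).im⟩ := hz
  set v : ι → ℂ := fun j => ((y - x) j : ℂ)
  have him : ∀ w : ℂ, (fun j => ((z + w • v) j).im) = x + (θ + w.im) • (y - x) := by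
    intro w
    rw [add_smul, ← add_assoc, hzθ]
    ext j
    simp [v]
  have hline : MapsTo (fun w : ℂ => z + w • v) (im ⁻¹' Icc (-θ) (1 - θ)) (tube K) := by
    intro w hw
    rw [mem_tube, him]
    refine hK.segment_subset hx hy ?_
    rw [segment_eq_image']
    exact ⟨θ + w.im, ⟨by linarith [hw.1], by linarith [hw.2]⟩, rfl⟩
  have hd : DiffContOnCl ℂ (fun w => f (z + w • v)) (im ⁻¹' Ioo (-θ) (1 - θ)) := by
    refine ⟨differentiableOn_comp_of_mapsTo_tube hK hKi hfc hfd
      (isOpen_Ioo.preimage continuous_im) (by fun_prop)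
      (hline.mono_left (preimage_mono Ioo_subset_Icc_self)), ?_⟩
    rw [closure_preimage_im, closure_Ioo (by linarith)]
    exact hfc.comp (by fun_prop) hline
  have := norm_le_on_horizontal_strip_of_bounded hd
    (fun w hw => hM _ (hline (preimage_mono Ioo_subset_Icc_self hw)))
    (fun w hw => hSx _ (by rw [mem_tube, him, hw]; simp))
    (fun w hw => hSy _ (by rw [mem_tube, him, hw]; simp)) (w := 0) (by simp [hθ.1]) (by simp [hθ.2])
  simpa using this

theorem convex_setOf_forall_mem_tube_norm_le (hK : Convex ℝ K) (hKi : (interior K).Nonempty)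
    (hfc : ContinuousOn f (tube K)) (hfd : DifferentiableOn ℂ f (tube (interior K))) {M : ℝ}
    (hM : ∀ z ∈ tube K, ‖f z‖ ≤ M) (S : ℝ) :
    Convex ℝ {p ∈ K | ∀ z ∈ tube {p}, ‖f z‖ ≤ S} := by
  refine convex_iff_segment_subset.2 fun x ⟨hx, hSx⟩ y ⟨hy, hSy⟩ q hq =>
    ⟨hK.segment_subset hx hy hq, fun z hz => ?_⟩
  exact norm_le_of_mem_tube_segment hK hKi hfc hfd hM hx hy hSx hSy
    (tube_mono (singleton_subset_iff.2 hq) hz)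

theorem norm_le_of_forall_mem_tube_extremePoints (hKc : IsCompact K) (hK : Convex ℝ K)
    (hKi : (interior K).Nonempty) (hfc : ContinuousOn f (tube K))
    (hfd : DifferentiableOn ℂ f (tube (interior K))) {M S : ℝ} (hM : ∀ z ∈ tube K, ‖f z‖ ≤ M)
    (hS : ∀ z ∈ tube (K.extremePoints ℝ), ‖f z‖ ≤ S) {z : ι → ℂ} (hz : z ∈ tube K) :
    ‖f z‖ ≤ S := by
  have hsub : K ⊆ {p ∈ K | ∀ z ∈ tube {p}, ‖f z‖ ≤ S} := by
    conv_lhs => rw [← closure_convexHull_extremePoints hKc hK]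
    refine closure_minimal (convexHull_min ?_ (convex_setOf_forall_mem_tube_norm_le hK hKi hfc
      hfd hM S)) (isClosed_setOf_forall_mem_tube_norm_le hKc.isClosed hfc S)
    exact fun p hp => ⟨extremePoints_subset hp,
      fun z hz => hS z (tube_mono (singleton_subset_iff.2 hp) hz)⟩
  exact (hsub hz).2 z rfl

theorem sup_on_tube_eq_sup_on_distinguished_boundary_general
    (n : ℕ) (F : Set (Fin n → ℝ)) (hF : F.Finite)
    (hΩ : (interior (convexHull ℝ F)).Nonempty)
    (f : (Fin n → ℂ) → ℂ)
    (hcont : ContinuousOn f {z : Fin n → ℂ | (fun j => (z j).im) ∈ convexHull ℝ F})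
    (hbdd : ∃ M : ℝ, ∀ z ∈ {z : Fin n → ℂ | (fun j => (z j).im) ∈ convexHull ℝ F},
        ‖f z‖ ≤ M)
    (hhol : DifferentiableOn ℂ f
        {z : Fin n → ℂ | (fun j => (z j).im) ∈ interior (convexHull ℝ F)}) :
    sSup ((fun z => ‖f z‖) ''
        {z : Fin n → ℂ | (fun j => (z j).im) ∈ convexHull ℝ F}) =
    sSup ((fun z => ‖f z‖) ''
        {z : Fin n → ℂ | (fun j => (z j).im) ∈ Set.extremePoints ℝ (convexHull ℝ F)}) := by
  set K := convexHull ℝ F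
  change sSup ((fun z => ‖f z‖) '' tube K) = sSup ((fun z => ‖f z‖) '' tube (K.extremePoints ℝ))
  obtain ⟨M, hM⟩ := hbdd
  have hKc : IsCompact K := hF.isCompact_convexHull ℝ
  have hEK : tube (K.extremePoints ℝ) ⊆ tube K := tube_mono extremePoints_subset
  have hE : (tube (K.extremePoints ℝ)).Nonempty :=
    (hKc.extremePoints_nonempty (hΩ.mono interior_subset)).tube
  have hbddE : BddAbove ((fun z => ‖f z‖) '' tube (K.extremePoints ℝ)) :=
    ⟨M, forall_mem_image.2 fun z hz => hM z (hEK hz)⟩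
  refine le_antisymm (csSup_le ((hE.mono hEK).image _) ?_)
    (csSup_le_csSup ⟨M, forall_mem_image.2 hM⟩ (hE.image _) (image_mono hEK))
  rintro _ ⟨z, hz, rfl⟩
  exact norm_le_of_forall_mem_tube_extremePoints hKc (convex_convexHull ℝ F) hΩ hcont hhol hM
    (fun z hz => le_csSup hbddE (mem_image_of_mem _ hz)) hz

/-- Lemma 2.2: on the tube over a bounded convex polyhedron, the supremum of a
bounded holomorphic function (continuous up to the boundary) is attained over the
distinguished boundary, i.e. the tube over the extreme points of the base. -/
theorem sup_on_tube_eq_sup_on_distinguished_boundary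
    (n : ℕ) (hn : 1 ≤ n) (F : Set (Fin n → ℝ)) (hF : F.Finite)
    (hΩ : (interior (convexHull ℝ F)).Nonempty)
    (f : (Fin n → ℂ) → ℂ)
    (hcont : ContinuousOn f {z : Fin n → ℂ | (fun j => (z j).im) ∈ convexHull ℝ F})
    (hbdd : ∃ M : ℝ, ∀ z ∈ {z : Fin n → ℂ | (fun j => (z j).im) ∈ convexHull ℝ F},
        ‖f z‖ ≤ M)
    (hhol : DifferentiableOn ℂ f
        {z : Fin n → ℂ | (fun j => (z j).im) ∈ interior (convexHull ℝ F)}) :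
    sSup ((fun z => ‖f z‖) ''
        {z : Fin n → ℂ | (fun j => (z j).im) ∈ convexHull ℝ F}) =
    sSup ((fun z => ‖f z‖) ''
        {z : Fin n → ℂ | (fun j => (z j).im) ∈ Set.extremePoints ℝ (convexHull ℝ F)}) :=
  sup_on_tube_eq_sup_on_distinguished_boundary_general n F hF hΩ f hcont hbdd hhol
end

section
/- Let n ≥ 3 and let K = {x ∈ ℝⁿ : |x_i − x_j| ≤ π/2 and |x_i + x_j| ≤ π/2 for all i ≠ j} (the closure of the polyhedron Ω attached to the root system Dₙ). Then the set of extreme points of K equals the union of {s·(π/2)·e_i : 1 ≤ i ≤ n, s ∈ {1,−1}} and {x ∈ ℝⁿ : x_j ∈ {π/4, −π/4} for every j}. (This is Lemma 3.11(ii)–(iii): ∂ₑΩ is the disjoint union of the Weyl group orbits of Y₁ = (π/2)e₁, Y₂ = (π/4)(e₁+⋯+eₙ) and Y₃ = (π/4)(e₁+⋯+e_{n−1}−eₙ).) -/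
open Real

private lemma pair_iff (a b c : ℝ) :
    (|a - b| ≤ c ∧ |a + b| ≤ c) ↔ |a| + |b| ≤ c := by
  rw [abs_le, abs_le]
  rcases abs_cases a with ⟨h1, h2⟩ | ⟨h1, h2⟩ <;>
    rcases abs_cases b with ⟨h3, h4⟩ | ⟨h3, h4⟩ <;>
      rw [h1, h3] <;> constructor <;> intro h <;>
        first
          | linarith [h.1.1, h.1.2, h.2.1, h.2.2]
          | (refine ⟨⟨?_, ?_⟩, ⟨?_, ?_⟩⟩ <;> linarith)

private lemma tight {a b u v c : ℝ} (ha : 0 < a) (hb : 0 < b) (hab : a + b = 1)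
    (h : a * u + b * v = c) (hu : u ≤ c) (hv : v ≤ c) : u = c ∧ v = c := by
  have h1 : a * u ≤ a * c := mul_le_mul_of_nonneg_left hu ha.le
  have h2 : b * v ≤ b * c := mul_le_mul_of_nonneg_left hv hb.le
  have h3 : a * c + b * c = c := by rw [← add_mul, hab, one_mul]
  constructor
  · exact mul_left_cancel₀ (ne_of_gt ha) (by linarith : a * u = a * c)
  · exact mul_left_cancel₀ (ne_of_gt hb) (by linarith : b * v = b * c)

private noncomputable def sgn (t : ℝ) : ℝ := if 0 < t then 1 else if t < 0 then -1 else 0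

private lemma abs_add_mul_sgn (t ε : ℝ) (ht : t ≠ 0) (hε : 0 ≤ ε) :
    |t + ε * sgn t| = |t| + ε := by
  rcases lt_or_gt_of_ne ht with h | h
  · rw [sgn, if_neg (by linarith), if_pos h, abs_of_neg h,
      abs_of_neg (by linarith : t + ε * (-1) < 0)]
    ring
  · rw [sgn, if_pos h, abs_of_pos h, abs_of_pos (by linarith : (0:ℝ) < t + ε * 1)]
    ring

private lemma abs_sub_mul_sgn (t ε : ℝ) (hε : 0 ≤ ε) (h : ε ≤ |t|) :
    |t - ε * sgn t| = |t| - ε := by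
  rcases lt_trichotomy t 0 with h1 | h1 | h1
  · rw [abs_of_neg h1] at h ⊢
    rw [sgn, if_neg (by linarith), if_pos h1, abs_of_nonpos (by linarith)]
    ring
  · have hε0 : ε = 0 := le_antisymm (by simpa [h1] using h) hε
    simp [h1, hε0, sgn]
  · rw [abs_of_pos h1] at h ⊢
    rw [sgn, if_pos h1, abs_of_nonneg (by linarith)]
    ring

private lemma sgn_zero' : sgn 0 = 0 := by simp [sgn]

private lemma sgn_ne_zero {t : ℝ} (h : t ≠ 0) : sgn t ≠ 0 := by
  rcases lt_or_gt_of_ne h with h1 | h1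
  · rw [sgn, if_neg (by linarith), if_pos h1]; norm_num
  · rw [sgn, if_pos h1]; norm_num

private lemma exists_distinct {n : ℕ} (hn : 3 ≤ n) (j : Fin n) :
    ∃ k l : Fin n, k ≠ j ∧ l ≠ j ∧ l ≠ k := by
  have h1 : ∀ (s : Finset (Fin n)), s.card ≤ 2 → ∃ m, m ∉ s := by
    intro s hs
    by_contra h
    push_neg at h
    have heq : s = Finset.univ := Finset.eq_univ_of_forall h
    rw [heq, Finset.card_univ, Fintype.card_fin] at hs
    omega
  obtain ⟨k, hk⟩ := h1 {j} (by simp)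
  obtain ⟨l, hl⟩ := h1 {j, k} ((Finset.card_insert_le _ _).trans (by simp))
  simp at hk hl
  exact ⟨k, l, hk, hl.1, hl.2⟩

private lemma not_extreme_aux {n : ℕ} {K : Set (Fin n → ℝ)} {x d : Fin n → ℝ} {ε : ℝ}
    (hε : 0 < ε) (i₀ : Fin n) (hd : d i₀ ≠ 0)
    (hy : (fun j => x j + ε * d j) ∈ K) (hz : (fun j => x j - ε * d j) ∈ K)
    (hx : x ∈ Set.extremePoints ℝ K) : False := by
  obtain ⟨-, hext⟩ := hx
  have hseg : x ∈ openSegment ℝ (fun j => x j + ε * d j) (fun j => x j - ε * d j) := by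
    refine ⟨1/2, 1/2, by norm_num, by norm_num, by norm_num, ?_⟩
    funext j
    simp [Pi.add_apply, Pi.smul_apply, smul_eq_mul]
    ring
  have h1 := hext hy hz hseg
  have h2 : x i₀ + ε * d i₀ = x i₀ := congrFun h1 i₀
  have h3 : ε * d i₀ = 0 := by linarith
  rcases mul_eq_zero.mp h3 with h | h
  · exact absurd h (ne_of_gt hε)
  · exact hd h
open Real

/-- Lemma 3.11(ii)-(iii) for n ≥ 3: the extreme points of the closure of the
polyhedron Ω attached to the root system Dₙ are the Weyl orbits of
Y₁ = (π/2)e₁ and of (π/4)(±e₁ ± ⋯ ± eₙ). -/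
theorem extremePoints_omega_Dn (n : ℕ) (hn : 3 ≤ n) :
    Set.extremePoints ℝ
      {x : Fin n → ℝ | ∀ i j : Fin n, i ≠ j →
          |x i - x j| ≤ π / 2 ∧ |x i + x j| ≤ π / 2} =
    {x : Fin n → ℝ | ∃ i : Fin n, ∃ s : ℝ, (s = 1 ∨ s = -1) ∧
        x = fun j => if j = i then s * (π / 2) else 0} ∪
    {x : Fin n → ℝ | ∀ j : Fin n, x j = π / 4 ∨ x j = -(π / 4)} := by
  set K : Set (Fin n → ℝ) := {x : Fin n → ℝ | ∀ i j : Fin n, i ≠ j →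
      |x i - x j| ≤ π / 2 ∧ |x i + x j| ≤ π / 2} with hKdef
  have memK : ∀ w : Fin n → ℝ, (∀ p q : Fin n, p ≠ q → |w p| + |w q| ≤ π / 2) → w ∈ K :=
    fun w hw p q hpq => (pair_iff _ _ _).mpr (hw p q hpq)
  have memK' : ∀ w : Fin n → ℝ, w ∈ K → ∀ p q : Fin n, p ≠ q → |w p| + |w q| ≤ π / 2 :=
    fun w hw p q hpq => (pair_iff _ _ _).mp (hw p q hpq)
  ext x
  simp only [Set.mem_union, Set.mem_setOf_eq]
  constructor
  · intro hx
    have hxK : x ∈ K := hx.1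
    have habs : ∀ a b : Fin n, a ≠ b → |x a| + |x b| ≤ π / 2 := memK' x hxK
    by_cases hA : ∃ i, π / 4 < |x i|
    · obtain ⟨i, hi⟩ := hA
      left
      have hsmall : ∀ j, j ≠ i → |x j| < π / 4 := by
        intro j hj
        have := habs i j (Ne.symm hj)
        linarith
      have hle : |x i| ≤ π / 2 := by
        obtain ⟨k, l, hk, -, -⟩ := exists_distinct hn i
        have h1 := habs i k (Ne.symm hk)
        have h2 := abs_nonneg (x k)
        linarith
      by_cases hhalf : |x i| = π / 2
      · have hzero : ∀ j, j ≠ i → x j = 0 := by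
          intro j hj
          have h1 := habs i j (Ne.symm hj)
          exact abs_eq_zero.mp (le_antisymm (by linarith) (abs_nonneg _))
        rcases (abs_eq (by positivity : (0:ℝ) ≤ π / 2)).mp hhalf with h | h
        · refine ⟨i, 1, Or.inl rfl, funext fun j => ?_⟩
          by_cases hj : j = i
          · rw [if_pos hj, hj, h, one_mul]
          · rw [if_neg hj, hzero j hj]
        · refine ⟨i, -1, Or.inr rfl, funext fun j => ?_⟩
          by_cases hj : j = i
          · rw [if_pos hj, hj, h]; ring
          · rw [if_neg hj, hzero j hj]
      · exfalso
        have hlt : |x i| < π / 2 := lt_of_le_of_ne hle hhalf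
        have hxi0 : x i ≠ 0 := by
          intro h
          rw [h, abs_zero] at hi
          linarith [pi_pos]
        set d : Fin n → ℝ := fun j => if j = i then sgn (x i) else -(sgn (x j)) with hd
        set g : Fin n → ℝ := fun j => if j = i then min (π / 2 - |x i|) (π / 4)
          else if x j = 0 then 1 else min |x j| (π / 4 - |x j|) with hg
        have hne : (Finset.univ : Finset (Fin n)).Nonempty := ⟨i, Finset.mem_univ i⟩
        set ε : ℝ := Finset.univ.inf' hne g with hεdef
        have hεpos : 0 < ε := by
          rw [hεdef, Finset.lt_inf'_iff]
          intro j _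
          simp only [hg]
          by_cases hji : j = i
          · rw [if_pos hji]
            exact lt_min (by linarith) (by linarith [pi_pos])
          · rw [if_neg hji]
            by_cases hj0 : x j = 0
            · rw [if_pos hj0]; norm_num
            · rw [if_neg hj0]
              exact lt_min (abs_pos.mpr hj0) (by linarith [hsmall j hji])
        have hεle : ∀ j, ε ≤ g j := fun j => Finset.inf'_le g (Finset.mem_univ j)
        have hεi' : ε ≤ (π / 2 - |x i|) ⊓ (π / 4) := by
          have h := hεle i
          simpa [hg] using h
        have hε1 : ε ≤ π / 2 - |x i| := hεi'.trans (min_le_left _ _)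
        have hε2 : ε ≤ π / 4 := hεi'.trans (min_le_right _ _)
        have hε3 : ∀ j, j ≠ i → x j ≠ 0 → ε ≤ |x j| ∧ ε ≤ π / 4 - |x j| := by
          intro j hj hj0
          have h := hεle j
          simp only [hg] at h
          rw [if_neg hj, if_neg hj0] at h
          exact ⟨h.trans (min_le_left _ _), h.trans (min_le_right _ _)⟩
        have hεlexi : ε ≤ |x i| := hε2.trans hi.le
        have hdi : d i = sgn (x i) := by simp [hd]
        have hdj : ∀ j, j ≠ i → d j = -(sgn (x j)) := by
          intro j hj; simp only [hd]; exact if_neg hj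
        have ci_p : |x i + ε * d i| = |x i| + ε := by
          rw [hdi]; exact abs_add_mul_sgn _ _ hxi0 hεpos.le
        have ci_m : |x i - ε * d i| = |x i| - ε := by
          rw [hdi]; exact abs_sub_mul_sgn _ _ hεpos.le hεlexi
        have cj0 : ∀ j, j ≠ i → x j = 0 → d j = 0 := by
          intro j hj h0
          rw [hdj j hj, h0, sgn_zero', neg_zero]
        have cj_p : ∀ j, j ≠ i → x j ≠ 0 → |x j + ε * d j| = |x j| - ε := by
          intro j hj h0
          rw [show x j + ε * d j = x j - ε * sgn (x j) by rw [hdj j hj]; ring]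
          exact abs_sub_mul_sgn _ _ hεpos.le (hε3 j hj h0).1
        have cj_m : ∀ j, j ≠ i → x j ≠ 0 → |x j - ε * d j| = |x j| + ε := by
          intro j hj h0
          rw [show x j - ε * d j = x j + ε * sgn (x j) by rw [hdj j hj]; ring]
          exact abs_add_mul_sgn _ _ h0 hεpos.le
        have q_p : ∀ j, j ≠ i → |x j + ε * d j| ≤ π / 4 := by
          intro j hj
          by_cases h0 : x j = 0
          · rw [cj0 j hj h0, h0]
            have hq4 : (0:ℝ) ≤ π / 4 := by positivity
            simpa using hq4
          · rw [cj_p j hj h0]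
            linarith [hsmall j hj]
        have q_m : ∀ j, j ≠ i → |x j - ε * d j| ≤ π / 4 := by
          intro j hj
          by_cases h0 : x j = 0
          · rw [cj0 j hj h0, h0]
            have hq4 : (0:ℝ) ≤ π / 4 := by positivity
            simpa using hq4
          · rw [cj_m j hj h0]
            linarith [(hε3 j hj h0).2]
        have hy : (fun j => x j + ε * d j) ∈ K := by
          apply memK
          intro p q hpq
          show |x p + ε * d p| + |x q + ε * d q| ≤ π / 2
          rcases eq_or_ne p i with hp | hp
          · have hq : q ≠ i := fun h => hpq (hp.trans h.symm)
            have hiq : i ≠ q := fun h => hq h.symm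
            rw [hp, ci_p]
            by_cases h0 : x q = 0
            · rw [cj0 q hq h0, h0]
              norm_num
              linarith
            · rw [cj_p q hq h0]
              have := habs i q hiq
              linarith
          · rcases eq_or_ne q i with hq | hq
            · rw [hq, ci_p]
              by_cases h0 : x p = 0
              · rw [cj0 p hp h0, h0]
                norm_num
                linarith
              · rw [cj_p p hp h0]
                have := habs p i hp
                linarith
            · have h1 := q_p p hp
              have h2 := q_p q hq
              linarith
        have hz : (fun j => x j - ε * d j) ∈ K := by
          apply memK
          intro p q hpq
          show |x p - ε * d p| + |x q - ε * d q| ≤ π / 2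
          rcases eq_or_ne p i with hp | hp
          · have hq : q ≠ i := fun h => hpq (hp.trans h.symm)
            have hiq : i ≠ q := fun h => hq h.symm
            rw [hp, ci_m]
            by_cases h0 : x q = 0
            · rw [cj0 q hq h0, h0]
              norm_num
              linarith
            · rw [cj_m q hq h0]
              have := habs i q hiq
              linarith
          · rcases eq_or_ne q i with hq | hq
            · rw [hq, ci_m]
              by_cases h0 : x p = 0
              · rw [cj0 p hp h0, h0]
                norm_num
                linarith
              · rw [cj_m p hp h0]
                have := habs p i hp
                linarith
            · have h1 := q_m p hp
              have h2 := q_m q hq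
              linarith
        have hdi0 : d i ≠ 0 := by rw [hdi]; exact sgn_ne_zero hxi0
        exact not_extreme_aux hεpos i hdi0 hy hz hx
    · push_neg at hA
      by_cases hC : ∀ j, x j = π / 4 ∨ x j = -(π / 4)
      · right; exact hC
      · exfalso
        push_neg at hC
        obtain ⟨k, hk1, hk2⟩ := hC
        have hklt : |x k| < π / 4 := by
          rcases lt_or_eq_of_le (hA k) with h | h
          · exact h
          · rcases (abs_eq (by positivity : (0:ℝ) ≤ π / 4)).mp h with h' | h'
            · exact absurd h' hk1
            · exact absurd h' hk2
        set d : Fin n → ℝ := fun j => if j = k then (1:ℝ) else 0 with hd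
        set ε : ℝ := π / 4 - |x k| with hεdef
        have hεpos : 0 < ε := by rw [hεdef]; linarith
        have cb : ∀ (j : Fin n) (c : ℝ), |c| = ε → |x j + c * d j| ≤ π / 4 := by
          intro j c hc
          by_cases hj : j = k
          · rw [hd]
            simp only [if_pos hj, mul_one]
            calc |x j + c| ≤ |x j| + |c| := abs_add_le _ _
              _ ≤ π / 4 := by rw [hc, hj, hεdef]; linarith
          · rw [hd]
            simp only [if_neg hj, mul_zero, add_zero]
            exact hA j
        have hy : (fun j => x j + ε * d j) ∈ K := by
          apply memK
          intro p q hpq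
          show |x p + ε * d p| + |x q + ε * d q| ≤ π / 2
          have h1 := cb p ε (abs_of_pos hεpos)
          have h2 := cb q ε (abs_of_pos hεpos)
          linarith
        have hz : (fun j => x j - ε * d j) ∈ K := by
          apply memK
          intro p q hpq
          show |x p - ε * d p| + |x q - ε * d q| ≤ π / 2
          have h1 := cb p (-ε) (by rw [abs_neg]; exact abs_of_pos hεpos)
          have h2 := cb q (-ε) (by rw [abs_neg]; exact abs_of_pos hεpos)
          rw [show x p + -ε * d p = x p - ε * d p by ring] at h1
          rw [show x q + -ε * d q = x q - ε * d q by ring] at h2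
          linarith
        have hdk : d k ≠ 0 := by rw [hd]; simp
        exact not_extreme_aux hεpos k hdk hy hz hx
  · intro hx
    rcases hx with ⟨i, s, hs, rfl⟩ | hx
    · -- x = s (π/2) e_i
      have hss : s * s = 1 := by rcases hs with rfl | rfl <;> norm_num
      have habs_s : |s| = 1 := by rcases hs with rfl | rfl <;> norm_num
      have coordabs : ∀ p : Fin n, |(if p = i then s * (π / 2) else 0 : ℝ)| =
          if p = i then π / 2 else 0 := by
        intro p
        by_cases hp : p = i
        · rw [if_pos hp, if_pos hp, abs_mul, habs_s, one_mul,
            abs_of_nonneg (by positivity : (0:ℝ) ≤ π / 2)]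
        · rw [if_neg hp, if_neg hp, abs_zero]
      have xK : (fun j => if j = i then s * (π / 2) else 0) ∈ K := by
        apply memK
        intro p q hpq
        show |(if p = i then s * (π / 2) else 0 : ℝ)| +
          |(if q = i then s * (π / 2) else 0 : ℝ)| ≤ π / 2
        rw [coordabs p, coordabs q]
        by_cases hp : p = i
        · have hq : ¬(q = i) := fun h => hpq (hp.trans h.symm)
          rw [if_pos hp, if_neg hq]; linarith
        · rw [if_neg hp]
          by_cases hq : q = i
          · rw [if_pos hq]; linarith
          · rw [if_neg hq]; linarith [pi_pos]
      refine ⟨xK, ?_⟩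
      intro y hy z hz hseg
      obtain ⟨a, b, ha, hb, hab, hsum⟩ := hseg
      have hco : ∀ j : Fin n, a * y j + b * z j =
          (if j = i then s * (π / 2) else 0 : ℝ) := by
        intro j
        have := congrFun hsum j
        simpa [Pi.add_apply, Pi.smul_apply, smul_eq_mul] using this
      have key : ∀ w : Fin n → ℝ, w ∈ K → ∀ j, j ≠ i →
          s * w i + w j ≤ π / 2 ∧ s * w i - w j ≤ π / 2 := by
        intro w hw j hj
        obtain ⟨h1, h2⟩ := hw i j (Ne.symm hj)
        rw [abs_le] at h1 h2
        rcases hs with rfl | rfl <;> constructor <;> linarith [h1.1, h1.2, h2.1, h2.2]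
      have step : ∀ j, j ≠ i →
          (s * y i + y j = π / 2 ∧ s * z i + z j = π / 2) ∧
          (s * y i - y j = π / 2 ∧ s * z i - z j = π / 2) := by
        intro j hj
        have hcoi := hco i
        have hcoj := hco j
        rw [if_pos rfl] at hcoi
        rw [if_neg hj] at hcoj
        have t1 : a * (s * y i + y j) + b * (s * z i + z j) = π / 2 := by
          linear_combination s * hcoi + hcoj + (π / 2) * hss
        have t2 : a * (s * y i - y j) + b * (s * z i - z j) = π / 2 := by
          linear_combination s * hcoi - hcoj + (π / 2) * hss
        exact ⟨tight ha hb hab t1 (key y hy j hj).1 (key z hz j hj).1,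
               tight ha hb hab t2 (key y hy j hj).2 (key z hz j hj).2⟩
      obtain ⟨k, l, hk, -, -⟩ := exists_distinct hn i
      have hyk := step k hk
      have hyi : y i = s * (π / 2) := by
        have h1 := hyk.1.1
        have h2 := hyk.2.1
        have h3 : s * y i = π / 2 := by linarith
        linear_combination s * h3 - y i * hss
      have hzi : z i = s * (π / 2) := by
        have h1 := hyk.1.2
        have h2 := hyk.2.2
        have h3 : s * z i = π / 2 := by linarith
        linear_combination s * h3 - z i * hss
      have hyj : ∀ j, j ≠ i → y j = 0 := by
        intro j hj
        have h1 := (step j hj).1.1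
        have h2 := (step j hj).2.1
        linarith
      have hzj : ∀ j, j ≠ i → z j = 0 := by
        intro j hj
        have h1 := (step j hj).1.2
        have h2 := (step j hj).2.2
        linarith
      suffices hboth : (y = fun j => if j = i then s * (π / 2) else 0) ∧ (z = fun j => if j = i then s * (π / 2) else 0) from hboth.1
      constructor
      · funext j
        by_cases hj : j = i
        · show y j = if j = i then s * (π / 2) else 0
          rw [if_pos hj, hj, hyi]
        · show y j = if j = i then s * (π / 2) else 0
          rw [if_neg hj, hyj j hj]
      · funext j
        by_cases hj : j = i
        · show z j = if j = i then s * (π / 2) else 0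
          rw [if_pos hj, hj, hzi]
        · show z j = if j = i then s * (π / 2) else 0
          rw [if_neg hj, hzj j hj]
    · -- x ∈ {±π/4}^n
      set sf : Fin n → ℝ := fun p => if x p = π / 4 then 1 else -1 with hsf
      have hsx : ∀ p, x p = sf p * (π / 4) := by
        intro p
        by_cases h : x p = π / 4
        · simp only [hsf]; rw [if_pos h, one_mul]; exact h
        · rcases hx p with h' | h'
          · exact absurd h' h
          · simp only [hsf]; rw [if_neg h, h']; ring
      have hss : ∀ p, sf p * sf p = 1 := by
        intro p
        simp only [hsf]
        by_cases h : x p = π / 4 <;> simp [h]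
      have habs4 : ∀ p, |x p| = π / 4 := by
        intro p
        rcases hx p with h | h
        · rw [h]; exact abs_of_nonneg (by positivity)
        · rw [h, abs_neg]; exact abs_of_nonneg (by positivity)
      have xK : x ∈ K := by
        apply memK
        intro p q hpq
        rw [habs4 p, habs4 q]
        linarith
      refine ⟨xK, ?_⟩
      intro y hy z hz hseg
      obtain ⟨a, b, ha, hb, hab, hsum⟩ := hseg
      have hco : ∀ j : Fin n, a * y j + b * z j = x j := by
        intro j
        have := congrFun hsum j
        simpa [Pi.add_apply, Pi.smul_apply, smul_eq_mul] using this
      have key : ∀ w : Fin n → ℝ, w ∈ K → ∀ p q : Fin n, p ≠ q →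
          sf p * w p + sf q * w q ≤ π / 2 := by
        intro w hw p q hpq
        obtain ⟨h1, h2⟩ := hw p q hpq
        rw [abs_le] at h1 h2
        simp only [hsf]
        split_ifs <;> linarith [h1.1, h1.2, h2.1, h2.2]
      have E : ∀ p q : Fin n, p ≠ q →
          (sf p * y p + sf q * y q = π / 2) ∧ (sf p * z p + sf q * z q = π / 2) := by
        intro p q hpq
        have hcp := hco p
        have hcq := hco q
        have t : a * (sf p * y p + sf q * y q) + b * (sf p * z p + sf q * z q) = π / 2 := by
          linear_combination sf p * hcp + sf q * hcq + sf p * hsx p + sf q * hsx q +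
            (π / 4) * hss p + (π / 4) * hss q
        exact tight ha hb hab t (key y hy p q hpq) (key z hz p q hpq)
      have hyall : ∀ j, y j = x j ∧ z j = x j := by
        intro j
        obtain ⟨k, l, hk, hl, hlk⟩ := exists_distinct hn j
        have e1 := E j k (Ne.symm hk)
        have e2 := E j l (Ne.symm hl)
        have e3 := E k l (Ne.symm hlk)
        constructor
        · have h3 : sf j * y j = π / 4 := by linarith [e1.1, e2.1, e3.1]
          rw [hsx j]
          linear_combination sf j * h3 - y j * hss j
        · have h3 : sf j * z j = π / 4 := by linarith [e1.2, e2.2, e3.2]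
          rw [hsx j]
          linear_combination sf j * h3 - z j * hss j
      exact funext fun j => (hyall j).1
end

section
/- Let n ≥ 2 and let K = {x ∈ ℝⁿ : x₁ + ⋯ + xₙ = 0 and |x_i − x_j| ≤ π/2 for all i, j}. Then the extreme points of K are exactly the vectors x for which there exists a subset S ⊆ {1,…,n} with 1 ≤ |S| ≤ n−1 such that x_i = (π/2)(1 − |S|/n) for i ∈ S and x_i = −(π/2)(|S|/n) for i ∉ S. (This is the description (3.2) of ∂ₑΩ for the root system A_{n−1} of 𝔰𝔩(n,ℝ): ∂ₑΩ = ∐_{q=1}^{n−1} 𝒲(Y_q) with Y_q = (π/2)(e₁+⋯+e_q − (q/n)(e₁+⋯+eₙ)) and 𝒲 the symmetric group permuting coordinates.) -/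
/-!
Write `c` for `π / 2`. On `K`, every functional `x ↦ x i - x j` is bounded by `c`. At the vertex
`c • (𝟙_S - (|S|/n) • 𝟙)` this bound is attained for every `i ∈ S`, `j ∉ S`, and these equalities
together with `∑ x i = 0` determine the point, so the vertex is extreme. Conversely, if no pair
`i ∈ U`, `j ∉ U` attains `|x i - x j| = c` for some proper nonempty `U`, then
`x ± ε (𝟙_U - (|U|/n) • 𝟙)` both lie in `K`, and `x` is not extreme. With `m = min x`, taking
`U = {i | m < x i < m + c}` shows that an extreme point takes only the values `m` and `m + c`, and
taking `U` a singleton rules out the constant point `0`.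
-/

open Real Finset

lemma eq_zero_of_sub_mem_of_add_mem {E : Type*} [AddCommGroup E] [Module ℝ E] {A : Set E}
    {x d : E} (hx : x ∈ A.extremePoints ℝ) (hsub : x - d ∈ A) (hadd : x + d ∈ A) : d = 0 := by
  simpa using hx.2 hsub hadd (mem_openSegment_sub_add x d)

lemma apply_eq_of_mem_openSegment {E : Type*} [AddCommGroup E] [Module ℝ E] (f : E →ₗ[ℝ] ℝ)
    {x y z : E} {c : ℝ} (hy : f y ≤ c) (hz : f z ≤ c) (hx : f x = c)
    (h : x ∈ openSegment ℝ y z) : f y = c := by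
  obtain ⟨a, b, ha, hb, hab, rfl⟩ := h
  simp only [map_add, map_smul, smul_eq_mul] at hx
  have hc : c = a * c + b * c := by rw [← add_mul, hab, one_mul]
  by_contra hne
  linarith [mul_lt_mul_of_pos_left (hy.lt_of_ne hne) ha, mul_le_mul_of_nonneg_left hz hb.le]

namespace TypeA

variable {ι : Type*} [Fintype ι] [DecidableEq ι]

def closedOmega (ι : Type*) [Fintype ι] (c : ℝ) : Set (ι → ℝ) :=
  {x | ∑ i, x i = 0 ∧ ∀ i j, |x i - x j| ≤ c}

/-- For `c = π / 2` and `S = {1, …, q}` this is the paper's `Y_q`. -/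
noncomputable def vertex (c : ℝ) (S : Finset ι) : ι → ℝ :=
  fun i => c * ((if i ∈ S then 1 else 0) - S.card / Fintype.card ι)

lemma sum_vertex (c : ℝ) (S : Finset ι) : ∑ i, vertex c S i = 0 := by
  rcases isEmpty_or_nonempty ι with _ | _
  · simp
  · have hcard : (Fintype.card ι : ℝ) ≠ 0 := by positivity
    simp only [vertex, ← mul_sum, sum_sub_distrib, sum_boole, sum_const, card_univ, nsmul_eq_mul]
    rw [filter_mem_eq_inter, univ_inter, mul_div_cancel₀ _ hcard, sub_self, mul_zero]

lemma vertex_sub_vertex (c : ℝ) (S : Finset ι) (i j : ι) :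
    vertex c S i - vertex c S j = c * ((if i ∈ S then 1 else 0) - (if j ∈ S then 1 else 0)) := by
  simp only [vertex]
  ring

lemma neg_vertex (c : ℝ) (S : Finset ι) : -vertex c S = vertex (-c) S := by
  ext i
  simp only [vertex, Pi.neg_apply]
  ring

lemma vertex_mem_closedOmega {c : ℝ} (hc : 0 ≤ c) (S : Finset ι) :
    vertex c S ∈ closedOmega ι c := by
  refine ⟨sum_vertex c S, fun i j => ?_⟩
  rw [vertex_sub_vertex]
  split_ifs <;> simp [abs_of_nonneg hc, hc]

lemma vertex_ne_zero {c : ℝ} (hc : c ≠ 0) {S : Finset ι} {i j : ι} (hi : i ∈ S) (hj : j ∉ S) :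
    vertex c S ≠ 0 := by
  intro h
  have := vertex_sub_vertex c S i j
  simp_all

lemma eq_vertex_of_forall {x : ι → ℝ} (hx : ∑ i, x i = 0) {S : Finset ι} {a c : ℝ}
    (hS : ∀ i ∈ S, x i = a + c) (hSc : ∀ i ∉ S, x i = a) : x = vertex c S := by
  have hx' : ∀ i, x i = a + c * (if i ∈ S then 1 else 0) := fun i => by
    by_cases hi : i ∈ S <;> simp [hi, hS, hSc]
  ext i
  have hcard : (Fintype.card ι : ℝ) ≠ 0 := by have : Nonempty ι := ⟨i⟩; positivity
  have ha : a = -(c * S.card / Fintype.card ι) := by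
    simp only [funext hx', sum_add_distrib, sum_const, card_univ, nsmul_eq_mul,
      mul_ite, mul_one, mul_zero, sum_ite_mem, univ_inter] at hx
    field_simp
    linarith
  rw [hx', vertex, ha]
  ring

lemma eq_vertex_iff {x : ι → ℝ} {c : ℝ} {S : Finset ι} :
    x = vertex c S ↔ ∀ i, (i ∈ S → x i = c * (1 - S.card / Fintype.card ι)) ∧
      (i ∉ S → x i = -(c * (S.card / Fintype.card ι))) := by
  refine funext_iff.trans (forall_congr' fun i => ?_)
  by_cases hi : i ∈ S <;> simp [vertex, hi]

lemma add_vertex_mem_closedOmega {c δ : ℝ} {x : ι → ℝ} (hx : x ∈ closedOmega ι c)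
    {U : Finset ι} (hU : ∀ i ∈ U, ∀ j ∉ U, |x i - x j| + |δ| ≤ c) :
    x + vertex δ U ∈ closedOmega ι c := by
  refine ⟨by simp [sum_add_distrib, hx.1, sum_vertex], fun i j => ?_⟩
  have hsplit : (x + vertex δ U) i - (x + vertex δ U) j =
      (x i - x j) + (vertex δ U i - vertex δ U j) := by
    simp only [Pi.add_apply]; ring
  rw [hsplit, vertex_sub_vertex]
  by_cases hi : i ∈ U <;> by_cases hj : j ∈ U
  · simpa [hi, hj] using hx.2 i j
  · simpa [hi, hj] using (abs_add_le _ _).trans (hU i hi j hj)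
  · have := hU j hj i hi
    rw [abs_sub_comm] at this
    simpa [hi, hj, ← sub_eq_add_neg] using (abs_sub _ _).trans this
  · simpa [hi, hj] using hx.2 i j

lemma exists_abs_sub_eq_of_mem_extremePoints {c : ℝ} {x : ι → ℝ}
    (hx : x ∈ (closedOmega ι c).extremePoints ℝ) {U : Finset ι} {i₀ j₀ : ι} (hi₀ : i₀ ∈ U)
    (hj₀ : j₀ ∉ U) : ∃ i ∈ U, ∃ j ∉ U, |x i - x j| = c := by
  obtain ⟨⟨i, j⟩, hij, hmin⟩ := (U ×ˢ Uᶜ).exists_min_image (fun p => c - |x p.1 - x p.2|)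
    ⟨(i₀, j₀), by simp [hi₀, hj₀]⟩
  simp only [mem_product, mem_compl] at hij
  refine ⟨i, hij.1, j, hij.2, le_antisymm (hx.1.2 i j) (not_lt.mp fun hlt => ?_)⟩
  set ε := c - |x i - x j|
  have hmem : ∀ δ, |δ| ≤ ε → x + vertex δ U ∈ closedOmega ι c := fun δ hδ =>
    add_vertex_mem_closedOmega hx.1 fun k hk l hl => by
      have := hmin (k, l) (by simp [hk, hl])
      dsimp only at this
      linarith
  have hzero : vertex ε U = 0 := by
    refine eq_zero_of_sub_mem_of_add_mem hx ?_ (hmem ε (abs_of_pos (by linarith)).le)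
    rw [sub_eq_add_neg, neg_vertex]
    exact hmem (-ε) (by rw [abs_neg, abs_of_pos (by linarith)])
  exact vertex_ne_zero (by linarith) hi₀ hj₀ hzero

lemma eq_or_eq_add_of_mem_extremePoints {c : ℝ} {x : ι → ℝ}
    (hx : x ∈ (closedOmega ι c).extremePoints ℝ) {i₀ : ι} (hmin : ∀ j, x i₀ ≤ x j) (i : ι) :
    x i = x i₀ ∨ x i = x i₀ + c := by
  by_contra! hi
  have hle : ∀ k, x k ≤ x i₀ + c := fun k => by linarith [(abs_le.mp (hx.1.2 k i₀)).2]
  set U := univ.filter fun k => x i₀ < x k ∧ x k < x i₀ + c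
  have hiU : i ∈ U := by
    simpa [U] using ⟨(hmin i).lt_of_ne' hi.1, (hle i).lt_of_ne hi.2⟩
  obtain ⟨k, hk, l, -, hkl⟩ :=
    exists_abs_sub_eq_of_mem_extremePoints hx hiU (by simp [U] : i₀ ∉ U)
  simp only [U, mem_filter, mem_univ, true_and] at hk
  -- a value strictly inside `(x i₀, x i₀ + c)` is within `c` of every value in `[x i₀, x i₀ + c]`
  have : |x k - x l| < c := abs_lt.mpr ⟨by linarith [hle l], by linarith [hmin l]⟩
  exact this.ne hkl

lemma exists_eq_vertex_of_mem_extremePoints {c : ℝ} (hc : 0 < c) (hι : 1 < Fintype.card ι)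
    {x : ι → ℝ} (hx : x ∈ (closedOmega ι c).extremePoints ℝ) :
    ∃ S : Finset ι, S.Nonempty ∧ S ≠ univ ∧ x = vertex c S := by
  have : Nonempty ι := Fintype.card_pos_iff.mp (by omega)
  obtain ⟨i₀, hmin⟩ := Finite.exists_min x
  have hval := eq_or_eq_add_of_mem_extremePoints hx hmin
  set S := univ.filter fun i => x i = x i₀ + c
  have hSc : ∀ i ∉ S, x i = x i₀ := fun i hi => (hval i).resolve_right (by simpa [S] using hi)
  have hi₀ : i₀ ∉ S := by simp [S, hc.ne']
  have hS : S.Nonempty := by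
    by_contra! hS
    obtain ⟨j₀, hj₀⟩ := Fintype.exists_ne_of_one_lt_card hι i₀
    obtain ⟨i, -, j, -, hij⟩ := exists_abs_sub_eq_of_mem_extremePoints hx (mem_singleton_self i₀)
      (by simpa using hj₀ : j₀ ∉ ({i₀} : Finset ι))
    rw [hSc i (by simp [hS]), hSc j (by simp [hS]), sub_self, abs_zero] at hij
    exact hc.ne hij
  exact ⟨S, hS, fun h => hi₀ (h ▸ mem_univ i₀),
    eq_vertex_of_forall hx.1.1 (fun i hi => (mem_filter.mp hi).2) hSc⟩

lemma vertex_mem_extremePoints {c : ℝ} (hc : 0 ≤ c) {S : Finset ι} {i₀ j₀ : ι} (hi₀ : i₀ ∈ S)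
    (hj₀ : j₀ ∉ S) : vertex c S ∈ (closedOmega ι c).extremePoints ℝ := by
  refine ⟨vertex_mem_closedOmega hc S, fun y hy z hz hseg => ?_⟩
  have hsat : ∀ i ∈ S, ∀ j ∉ S, y i - y j = c := fun i hi j hj => by
    let f : (ι → ℝ) →ₗ[ℝ] ℝ := LinearMap.proj (R := ℝ) (φ := fun _ : ι => ℝ) i - LinearMap.proj j
    have hf : ∀ w, f w = w i - w j := fun _ => rfl
    refine (hf y).symm.trans (apply_eq_of_mem_openSegment f ?_ ?_ ?_ hseg)
    · exact (hf y).trans_le (abs_le.mp (hy.2 i j)).2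
    · exact (hf z).trans_le (abs_le.mp (hz.2 i j)).2
    · simp [hf, vertex_sub_vertex, hi, hj]
  exact eq_vertex_of_forall hy.1 (a := y j₀) (fun i hi => by linarith [hsat i hi j₀ hj₀])
    fun j hj => by linarith [hsat i₀ hi₀ j hj, hsat i₀ hi₀ j₀ hj₀]

theorem extremePoints_closedOmega {c : ℝ} (hc : 0 < c) (hι : 1 < Fintype.card ι) :
    (closedOmega ι c).extremePoints ℝ =
      {x | ∃ S : Finset ι, S.Nonempty ∧ S ≠ univ ∧ x = vertex c S} := by
  ext x
  refine ⟨exists_eq_vertex_of_mem_extremePoints hc hι, ?_⟩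
  rintro ⟨S, ⟨i₀, hi₀⟩, hS, rfl⟩
  obtain ⟨j₀, hj₀⟩ : ∃ j, j ∉ S := by
    by_contra! h
    exact hS (eq_univ_of_forall h)
  exact vertex_mem_extremePoints hc.le hi₀ hj₀

end TypeA

/-- Description (3.2) of ∂ₑΩ for the root system A_{n−1} of 𝔰𝔩(n,ℝ): the extreme
points of K = {x : Σ xᵢ = 0, |xᵢ − xⱼ| ≤ π/2} are the Weyl (= symmetric group)
orbits of Y_q = (π/2)(e₁+⋯+e_q − (q/n)(e₁+⋯+eₙ)), 1 ≤ q ≤ n−1. -/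
theorem extremePoints_omega_An (n : ℕ) (hn : 2 ≤ n) :
    Set.extremePoints ℝ
      {x : Fin n → ℝ | (∑ i, x i) = 0 ∧ ∀ i j : Fin n, |x i - x j| ≤ π / 2} =
    {x : Fin n → ℝ | ∃ S : Finset (Fin n), 1 ≤ S.card ∧ S.card ≤ n - 1 ∧
        ∀ i : Fin n,
          (i ∈ S → x i = (π / 2) * (1 - (S.card : ℝ) / (n : ℝ))) ∧
          (i ∉ S → x i = -((π / 2) * ((S.card : ℝ) / (n : ℝ))))} := by
  have hcard : 1 < Fintype.card (Fin n) := by rw [Fintype.card_fin]; omega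
  change (TypeA.closedOmega (Fin n) (π / 2)).extremePoints ℝ = _
  rw [TypeA.extremePoints_closedOmega (by positivity) hcard]
  ext x
  refine exists_congr fun S => ?_
  rw [one_le_card, Nat.le_sub_one_iff_lt (by omega), ← card_lt_iff_ne_univ, TypeA.eq_vertex_iff,
    Fintype.card_fin]
end

section
/- Let E be a nontrivial finite-dimensional real inner product space and Σ a finite set of nonzero vectors of E with s_α(Σ) = Σ for every α ∈ Σ, where s_α is the orthogonal reflection in α^⊥; let W be the subgroup of linear isometries of E generated by {s_α : α ∈ Σ}. Suppose α₁,…,αₙ ∈ Σ and ω₁,…,ωₙ is a basis of E with ⟨ω_i, α_j⟩ = δ_{ij}; let C = {x ∈ E : ⟨x, α_j⟩ ≥ 0 for all j}. Suppose m₁,…,mₙ are positive integers such that β := m₁α₁ + ⋯ + mₙαₙ belongs to Σ and |⟨x, α⟩| ≤ ⟨x, β⟩ for every α ∈ Σ and every x ∈ C (β is the highest root), and suppose that for every x ∈ E there exists w ∈ W with w(x) ∈ C (the Weyl chambers cover E). Let K = {x ∈ E : |⟨x,α⟩| ≤ π/2 for all α ∈ Σ}. Then every extreme point of K is of the form w((π/(2m_j))·ω_j)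 for some w ∈ W and some j ∈ {1,…,n}. (This is Lemma 3.16: Ext(Ω̄) ⊆ 𝒲((π/2){ω₁/m₁, …, ωₙ/mₙ}).) -/
open Real
open scoped RealInnerProductSpace

/-!
Since the Weyl group permutes `Φ`, it acts on `K` by linear isometries and hence permutes the
extreme points of `K`; so it suffices to treat an extreme point `y` lying in the chamber `C`.
In the coordinates `⟪y, αⱼ⟫` with respect to the basis `ω`, the part of `K` inside `C` is the
simplex `{t ≥ 0, ∑ mⱼ tⱼ ≤ π/2}`: one inequality is `β ∈ Φ`, the other is that `β` is the
highest root. Hence `y` is an extreme point of the convex hull of `0` and the points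
`(π / (2 mⱼ)) • ωⱼ`, so it is one of them, and it is not `0` because `K` is symmetric.
-/

section Convex

variable {E : Type*} [AddCommGroup E] [Module ℝ E]

theorem sum_smul_mem_convexHull_insert_zero {ι : Type*} [Fintype ι] {w : ι → ℝ} {p : ι → E}
    (hw₀ : ∀ i, 0 ≤ w i) (hw₁ : ∑ i, w i ≤ 1) :
    ∑ i, w i • p i ∈ convexHull ℝ (insert 0 (Set.range p)) := by
  have := (convex_convexHull ℝ (insert 0 (Set.range p))).sum_mem (t := Finset.univ)
    (w := fun o : Option ι => o.elim (1 - ∑ i, w i) w) (z := fun o => o.elim 0 p)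
    (by rintro (_ | i) - <;> simp [hw₀, hw₁])
    (by simp [Fintype.sum_option])
    (by rintro (_ | i) - <;> exact subset_convexHull ℝ _ (by simp))
  simpa [Fintype.sum_option] using this

theorem zero_notMem_extremePoints_of_neg_mem {K : Set E} (hneg : ∀ x ∈ K, -x ∈ K)
    {v : E} (hv : v ∈ K) (hv₀ : v ≠ 0) : (0 : E) ∉ K.extremePoints ℝ := fun h =>
  hv₀ (h.2 hv (hneg v hv) ⟨1 / 2, 1 / 2, by norm_num, by norm_num, by norm_num, by module⟩)

theorem LinearEquiv.mem_extremePoints_of_preimage_eq {K : Set E} (f : E ≃ₗ[ℝ] E)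
    (hf : f ⁻¹' K = K) {x : E} (hx : x ∈ K.extremePoints ℝ) : f x ∈ K.extremePoints ℝ := by
  have := image_extremePoints f K ▸ Set.mem_image_of_mem f hx
  rwa [← hf, f.surjective.image_preimage] at this

end Convex

section InnerProduct

variable {E : Type*} [NormedAddCommGroup E] [InnerProductSpace ℝ E]

theorem image_eq_self_of_mem_closure {S : Set (E ≃ₗᵢ[ℝ] E)} {Φ : Set E}
    (hS : ∀ s ∈ S, s '' Φ = Φ) {w : E ≃ₗᵢ[ℝ] E} (hw : w ∈ Subgroup.closure S) : w '' Φ = Φ := by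
  induction hw using Subgroup.closure_induction with
  | mem s hs => exact hS s hs
  | one => simp
  | mul g₁ g₂ _ _ h₁ h₂ => rw [LinearIsometryEquiv.coe_mul, Set.image_comp, h₂, h₁]
  | inv g _ h =>
    nth_rw 1 [← h]
    rw [← Set.image_comp]
    simp

theorem convex_setOf_forall_abs_inner_le (Φ : Set E) (c : ℝ) :
    Convex ℝ {x : E | ∀ γ ∈ Φ, |⟪x, γ⟫| ≤ c} := by
  intro x hx y hy a b ha hb hab γ hγ
  calc |⟪a • x + b • y, γ⟫| = |a * ⟪x, γ⟫ + b * ⟪y, γ⟫| := by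
        rw [inner_add_left, real_inner_smul_left, real_inner_smul_left]
    _ ≤ a * |⟪x, γ⟫| + b * |⟪y, γ⟫| := by
        refine (abs_add_le _ _).trans_eq ?_
        rw [abs_mul, abs_mul, abs_of_nonneg ha, abs_of_nonneg hb]
    _ ≤ a * c + b * c := by gcongr; exacts [hx γ hγ, hy γ hγ]
    _ = c := by rw [← add_mul, hab, one_mul]

theorem LinearIsometryEquiv.preimage_setOf_forall_abs_inner_le {Φ : Set E} (f : E ≃ₗᵢ[ℝ] E)
    (hf : f '' Φ = Φ) (c : ℝ) :
    f ⁻¹' {x : E | ∀ γ ∈ Φ, |⟪x, γ⟫| ≤ c} = {x : E | ∀ γ ∈ Φ, |⟪x, γ⟫| ≤ c} := by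
  ext x
  conv_lhs => rw [Set.mem_preimage, Set.mem_ofPred_eq, ← hf]
  simp only [Set.forall_mem_image, f.inner_map_map, Set.mem_ofPred_eq]

end InnerProduct

section Chamber

variable {E : Type*} [NormedAddCommGroup E] [InnerProductSpace ℝ E]
  {ι : Type*} [Fintype ι] [DecidableEq ι] {ω : Module.Basis ι ℝ E} {α : ι → E}

theorem Module.Basis.sum_inner_smul_eq_of_inner_eq_ite
    (hdual : ∀ i j, ⟪ω i, α j⟫ = if i = j then 1 else 0) (z : E) :
    ∑ j, ⟪z, α j⟫ • ω j = z := by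
  have hrepr (j : ι) : ⟪z, α j⟫ = ω.repr z j :=
    calc ⟪z, α j⟫ = ⟪∑ i, ω.repr z i • ω i, α j⟫ := by rw [ω.sum_repr]
      _ = ω.repr z j := by
        simp only [sum_inner, real_inner_smul_left, hdual, mul_ite, mul_one, mul_zero,
          Finset.sum_ite_eq', Finset.mem_univ, if_true]
  simp_rw [hrepr, ω.sum_repr]

theorem inner_div_smul_basis_sum_smul_eq
    (hdual : ∀ i j, ⟪ω i, α j⟫ = if i = j then 1 else 0) {m : ι → ℝ} (hm : ∀ j, 0 < m j)
    (c : ℝ) (j : ι) : ⟪(c / m j) • ω j, ∑ k, m k • α k⟫ = c := by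
  simp only [inner_sum, real_inner_smul_right, real_inner_smul_left, hdual, mul_ite, mul_one,
    mul_zero, Finset.sum_ite_eq, Finset.mem_univ, if_true]
  field_simp [(hm j).ne']

theorem mem_convexHull_of_inner_nonneg
    (hdual : ∀ i j, ⟪ω i, α j⟫ = if i = j then 1 else 0) {m : ι → ℝ} (hm : ∀ j, 0 < m j)
    {c : ℝ} (hc : 0 < c) {z : E} (hz : ∀ j, 0 ≤ ⟪z, α j⟫) (hzβ : ⟪z, ∑ j, m j • α j⟫ ≤ c) :
    z ∈ convexHull ℝ (insert 0 (Set.range fun j => (c / m j) • ω j)) := by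
  have hsum : ∑ j, m j * ⟪z, α j⟫ / c ≤ 1 := by
    rw [← Finset.sum_div, div_le_one hc]
    simpa [inner_sum, real_inner_smul_right] using hzβ
  have := sum_smul_mem_convexHull_insert_zero
    (p := fun j => (c / m j) • ω j) (fun j => by have := hm j; have := hz j; positivity) hsum
  convert this using 1
  conv_lhs => rw [← ω.sum_inner_smul_eq_of_inner_eq_ite hdual z]
  refine Finset.sum_congr rfl fun j _ => ?_
  rw [smul_smul]
  congr 1
  field_simp [(hm j).ne']

theorem exists_eq_smul_of_mem_extremePoints_of_inner_nonneg [Nonempty ι]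
    (hdual : ∀ i j, ⟪ω i, α j⟫ = if i = j then 1 else 0) {Φ : Set E} {m : ι → ℝ}
    (hm : ∀ j, 0 < m j) (hβΦ : ∑ j, m j • α j ∈ Φ)
    (hhighest : ∀ γ ∈ Φ, ∀ x ∈ {x : E | ∀ j, 0 ≤ ⟪x, α j⟫}, |⟪x, γ⟫| ≤ ⟪x, ∑ j, m j • α j⟫)
    {c : ℝ} (hc : 0 < c) {y : E}
    (hy : y ∈ {x : E | ∀ γ ∈ Φ, |⟪x, γ⟫| ≤ c}.extremePoints ℝ) (hyC : ∀ j, 0 ≤ ⟪y, α j⟫) :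
    ∃ j, y = (c / m j) • ω j := by
  set K := {x : E | ∀ γ ∈ Φ, |⟪x, γ⟫| ≤ c}
  have hvK : ∀ j, (c / m j) • ω j ∈ K := fun j γ hγ => by
    refine (hhighest γ hγ _ fun k => ?_).trans (inner_div_smul_basis_sum_smul_eq hdual hm c j).le
    rw [real_inner_smul_left, hdual]
    have := hm j
    split_ifs <;> positivity
  have hhullK : convexHull ℝ (insert 0 (Set.range fun j => (c / m j) • ω j)) ⊆ K :=
    convexHull_min
      (Set.insert_subset (fun γ _ => by simpa using hc.le) (Set.range_subset_iff.2 hvK))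
      (convex_setOf_forall_abs_inner_le Φ c)
  have hyhull := mem_convexHull_of_inner_nonneg hdual hm hc hyC
    ((le_abs_self _).trans (hy.1 _ hβΦ))
  obtain rfl | ⟨j, rfl⟩ := extremePoints_convexHull_subset
    (inter_extremePoints_subset_extremePoints_of_subset hhullK ⟨hyhull, hy⟩)
  · obtain ⟨j⟩ := ‹Nonempty ι›
    refine absurd hy (zero_notMem_extremePoints_of_neg_mem (fun x hx γ hγ => ?_) (hvK j)
      (smul_ne_zero (div_pos hc (hm j)).ne' (ω.ne_zero j)))
    simpa [inner_neg_left] using hx γ hγ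
  · exact ⟨j, rfl⟩

end Chamber

theorem extremePoints_subset_weyl_orbit_of_fundamental_weights_general
    {E : Type*} [NormedAddCommGroup E] [InnerProductSpace ℝ E]
    (Φ : Set E)
    (hrefl : ∀ α ∈ Φ,
      (fun x : E => x - (2 * ⟪x, α⟫ / ⟪α, α⟫) • α) '' Φ = Φ)
    (W : Subgroup (E ≃ₗᵢ[ℝ] E))
    (hW : W = Subgroup.closure
      {w : E ≃ₗᵢ[ℝ] E | ∃ α ∈ Φ, ∀ x : E,
        w x = x - (2 * ⟪x, α⟫ / ⟪α, α⟫) • α})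
    (n : ℕ) (hn : 1 ≤ n)
    (α : Fin n → E)
    (ω : Module.Basis (Fin n) ℝ E)
    (hdual : ∀ i j : Fin n, ⟪ω i, α j⟫ = if i = j then 1 else 0)
    (C : Set E) (hC : C = {x : E | ∀ j : Fin n, 0 ≤ ⟪x, α j⟫})
    (m : Fin n → ℕ) (hm : ∀ j, 0 < m j)
    (β : E) (hβ : β = ∑ j, (m j : ℝ) • α j) (hβΦ : β ∈ Φ)
    (hhighest : ∀ γ ∈ Φ, ∀ x ∈ C, |⟪x, γ⟫| ≤ ⟪x, β⟫)
    (hcover : ∀ x : E, ∃ w ∈ W, (w : E ≃ₗᵢ[ℝ] E) x ∈ C)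
    (K : Set E) (hK : K = {x : E | ∀ γ ∈ Φ, |⟪x, γ⟫| ≤ π / 2}) :
    ∀ x ∈ Set.extremePoints ℝ K, ∃ w ∈ W, ∃ j : Fin n,
      x = (w : E ≃ₗᵢ[ℝ] E) ((π / (2 * (m j : ℝ))) • ω j) := by
  intro x hx
  subst hW hC hβ hK
  obtain ⟨w, hwW, hwC⟩ := hcover x
  have hwΦ : w '' Φ = Φ := image_eq_self_of_mem_closure
    (by rintro s ⟨γ, hγ, hs⟩; exact funext hs ▸ hrefl γ hγ) hwW
  have hwx := w.toLinearEquiv.mem_extremePoints_of_preimage_eq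
    (w.preimage_setOf_forall_abs_inner_le hwΦ _) hx
  have : Nonempty (Fin n) := ⟨⟨0, hn⟩⟩
  obtain ⟨j, hj⟩ := exists_eq_smul_of_mem_extremePoints_of_inner_nonneg hdual
    (fun j => Nat.cast_pos.2 (hm j)) hβΦ hhighest (by positivity) hwx hwC
  refine ⟨w⁻¹, inv_mem hwW, j, ?_⟩
  rw [← div_div, ← hj]
  simp

/-- Lemma 3.16: Ext(Ω̄) ⊆ 𝒲((π/2){ω₁/m₁, …, ωₙ/mₙ}). Here Σ is a finite
reflection-invariant set of nonzero vectors, α₁,…,αₙ ∈ Σ with dual basis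
ω₁,…,ωₙ, C the corresponding closed Weyl chamber, β = Σ mⱼαⱼ the highest root,
and every point of E can be moved into C by the Weyl group W. -/
theorem extremePoints_subset_weyl_orbit_of_fundamental_weights
    {E : Type*} [NormedAddCommGroup E] [InnerProductSpace ℝ E]
    [FiniteDimensional ℝ E] [Nontrivial E]
    (Φ : Set E) (hfin : Φ.Finite) (h0 : (0 : E) ∉ Φ)
    (hrefl : ∀ α ∈ Φ,
      (fun x : E => x - (2 * ⟪x, α⟫ / ⟪α, α⟫) • α) '' Φ = Φ)
    (W : Subgroup (E ≃ₗᵢ[ℝ] E))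
    (hW : W = Subgroup.closure
      {w : E ≃ₗᵢ[ℝ] E | ∃ α ∈ Φ, ∀ x : E,
        w x = x - (2 * ⟪x, α⟫ / ⟪α, α⟫) • α})
    (n : ℕ) (hn : 1 ≤ n)
    (α : Fin n → E) (hα : ∀ j, α j ∈ Φ)
    (ω : Module.Basis (Fin n) ℝ E)
    (hdual : ∀ i j : Fin n, ⟪ω i, α j⟫ = if i = j then 1 else 0)
    (C : Set E) (hC : C = {x : E | ∀ j : Fin n, 0 ≤ ⟪x, α j⟫})
    (m : Fin n → ℕ) (hm : ∀ j, 0 < m j)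
    (β : E) (hβ : β = ∑ j, (m j : ℝ) • α j) (hβΦ : β ∈ Φ)
    (hhighest : ∀ γ ∈ Φ, ∀ x ∈ C, |⟪x, γ⟫| ≤ ⟪x, β⟫)
    (hcover : ∀ x : E, ∃ w ∈ W, (w : E ≃ₗᵢ[ℝ] E) x ∈ C)
    (K : Set E) (hK : K = {x : E | ∀ γ ∈ Φ, |⟪x, γ⟫| ≤ π / 2}) :
    ∀ x ∈ Set.extremePoints ℝ K, ∃ w ∈ W, ∃ j : Fin n,
      x = (w : E ≃ₗᵢ[ℝ] E) ((π / (2 * (m j : ℝ))) • ω j) :=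
  extremePoints_subset_weyl_orbit_of_fundamental_weights_general Φ hrefl W hW n hn α ω hdual C hC m
    hm β hβ hβΦ hhighest hcover K hK
end

section
/- Let L be a Lie algebra over ℂ and let σ : L → L be a map which is additive, conjugate-linear (σ(c • x) = (conj c) • σ(x) for all c ∈ ℂ, x ∈ L), satisfies σ([x,y]) = [σ(x), σ(y)] for all x, y ∈ L, and σ ∘ σ = id (an antilinear involutive automorphism, e.g. the conjugation with respect to a compact real form). Then the ℂ-linear map from the base change ℂ ⊗_ℝ L (the complexification of L regarded as a real Lie algebra) to the product Lie algebra L × L determined on pure tensors by c ⊗ x ↦ (c • x, c • σ(x)) is an isomorphism of complex Lie algebras. (This is the structural fact underlying Proposition 3.6: for a complex Lie algebra 𝔤 with conjugation with respect to a compact real form, 𝔤_ℂ ≅ 𝔤 ⊕ 𝔤.) -/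
/-!
The map is the `ℂ`-linear extension of the real Lie algebra map `x ↦ (x, σ x)`, hence a Lie
algebra map. Its inverse is `(a, b) ↦ ½ (1 ⊗ a - i ⊗ i a) + ½ (1 ⊗ σ b - i ⊗ σ (i b))`: for every
`ℝ`-linear `τ`, the map `y ↦ ½ (1 ⊗ τ y - i ⊗ τ (i y))` is `ℂ`-linear, and both composites are the
identity because `σ (i y) = -i σ y` and `σ ∘ σ = id`.
-/

open scoped TensorProduct

namespace ComplexificationProd

variable {L : Type*} [LieRing L]

/-- The componentwise bracket on the product Lie algebra L × L. -/
instance : Bracket (L × L) (L × L) :=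
  ⟨fun x y => (⁅x.1, y.1⁆, ⁅x.2, y.2⁆)⟩

@[simp] theorem prod_bracket_def (x y : L × L) :
    ⁅x, y⁆ = (⁅x.1, y.1⁆, ⁅x.2, y.2⁆) := rfl

/-- The product (direct sum) Lie ring structure on L × L. -/
instance : LieRing (L × L) where
  add_lie x y z := by ext <;> simp
  lie_add x y z := by ext <;> simp
  lie_self x := by ext <;> simp
  leibniz_lie x y z := by ext <;> simp

variable [LieAlgebra ℂ L]

/-- The product complex Lie algebra structure on L × L. -/
instance : LieAlgebra ℂ (L × L) where
  lie_smul c x y := by ext <;> simp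

noncomputable instance instLieRingBaseChange : LieRing (ℂ ⊗[ℝ] (RestrictScalars ℝ ℂ L)) :=
  LieAlgebra.ExtendScalars.instLieRing ℝ ℂ (RestrictScalars ℝ ℂ L)

noncomputable instance instLieAlgebraBaseChange :
    LieAlgebra ℂ (ℂ ⊗[ℝ] (RestrictScalars ℝ ℂ L)) :=
  LieAlgebra.ExtendScalars.instLieAlgebra ℝ ℂ (RestrictScalars ℝ ℂ L)

open Complex (I)

theorem _root_.Complex.smul_eq_re_smul_add_im_smul {W : Type*} [AddCommGroup W] [Module ℂ W]
    [Module ℝ W] [IsScalarTower ℝ ℂ W] (c : ℂ) (w : W) :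
    c • w = c.re • w + c.im • I • w := by
  rw [RCLike.real_smul_eq_coe_smul (K := ℂ), RCLike.real_smul_eq_coe_smul (K := ℂ), smul_smul,
    ← add_smul]
  congr 1
  exact (Complex.re_add_im c).symm

def _root_.LinearMap.complexLinearOfMapISMul {V W : Type*} [AddCommGroup V] [Module ℂ V]
    [Module ℝ V] [IsScalarTower ℝ ℂ V] [AddCommGroup W] [Module ℂ W] [Module ℝ W]
    [IsScalarTower ℝ ℂ W] (f : V →ₗ[ℝ] W) (hf : ∀ v, f (I • v) = I • f v) :
    V →ₗ[ℂ] W where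
  __ := f
  map_smul' c v := by
    simp only [AddHom.toFun_eq_coe, LinearMap.coe_toAddHom, RingHom.id_apply,
      Complex.smul_eq_re_smul_add_im_smul c, map_add, map_smul, hf]

section LiftBaseChange

variable {R M N : Type*} [CommRing R] [LieRing M] [LieAlgebra R M] [LieRing N] [Module R N]

def _root_.LinearMap.liftBaseChangeLieHom (A : Type*) [CommRing A] [Algebra R A] [LieAlgebra A N]
    [IsScalarTower R A N] (f : M →ₗ[R] N) (hf : ∀ x y, f ⁅x, y⁆ = ⁅f x, f y⁆) :
    A ⊗[R] M →ₗ⁅A⁆ N where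
  __ := f.liftBaseChange A
  map_lie' {x y} := by
    induction x using TensorProduct.induction_on with
    | zero => simp
    | add x₁ x₂ h₁ h₂ => simp_all [add_lie]
    | tmul a m =>
      induction y using TensorProduct.induction_on with
      | zero => simp
      | add y₁ y₂ h₁ h₂ => simp_all [lie_add]
      | tmul b n => simp [hf, smul_lie, lie_smul, smul_smul, mul_comm a b]

end LiftBaseChange

def _root_.RestrictScalars.linearEquiv (R S M : Type*) [CommSemiring R] [Semiring S] [Algebra R S]
    [AddCommMonoid M] [Module S M] [Module R M] [IsScalarTower R S M] :
    RestrictScalars R S M ≃ₗ[R] M where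
  __ := RestrictScalars.addEquiv R S M
  map_smul' r x := algebraMap_smul S r (RestrictScalars.addEquiv R S M x)

section Conjugation

variable {V : Type*} [AddCommGroup V] [Module ℂ V]

def _root_.LinearMap.realOfConjLinear (σ : V →ₗ⋆[ℂ] V) : V →ₗ[ℝ] V where
  toFun := σ
  map_add' := map_add σ
  map_smul' r x := by
    rw [RCLike.real_smul_eq_coe_smul (K := ℂ), map_smulₛₗ, RCLike.conj_ofReal,
      RCLike.real_smul_eq_coe_smul (K := ℂ)]
    rfl

@[simp]
theorem _root_.LinearMap.realOfConjLinear_apply (σ : V →ₗ⋆[ℂ] V) (x : V) :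
    σ.realOfConjLinear x = σ x :=
  rfl

-- Stated with the real scalar `-1`: a negation produced in `V` does not match the one of
-- `RestrictScalars ℝ ℂ V` inside tensor products, while the real scalar actions agree.
theorem map_I_smul (σ : V →ₗ⋆[ℂ] V) (x : V) : σ (I • x) = (-1 : ℝ) • I • σ x := by
  rw [map_smulₛₗ, Complex.conj_I, neg_smul, neg_one_smul]

variable {W : Type*} [AddCommMonoid W] [Module ℝ W]

noncomputable def complexLinearLift (τ : V →ₗ[ℝ] W) : V →ₗ[ℂ] ℂ ⊗[ℝ] W :=
  LinearMap.complexLinearOfMapISMul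
    { toFun y := (2⁻¹ : ℂ) • ((1 : ℂ) ⊗ₜ τ y - I ⊗ₜ τ (I • y))
      map_add' y z := by
        simp only [smul_add, map_add, TensorProduct.tmul_add]
        module
      map_smul' r y := by
        simp only [smul_comm I r y, map_smul, TensorProduct.tmul_smul, ← smul_sub]
        exact smul_comm _ _ _ }
    (fun y => by
      have hI (w : W) : I ⊗ₜ[ℝ] w = I • ((1 : ℂ) ⊗ₜ w) := by
        rw [TensorProduct.smul_tmul', smul_eq_mul, mul_one]
      have hII : τ (I • I • y) = (-1 : ℝ) • τ y := by
        rw [← map_smul, smul_smul, Complex.I_mul_I, RCLike.real_smul_eq_coe_smul (K := ℂ)]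
        norm_num
      simp only [LinearMap.coe_mk, AddHom.coe_mk, hII, TensorProduct.tmul_smul, neg_one_smul, hI]
      match_scalars <;> simp [Complex.ext_iff])

theorem complexLinearLift_apply (τ : V →ₗ[ℝ] W) (y : V) :
    complexLinearLift τ y = (2⁻¹ : ℂ) • ((1 : ℂ) ⊗ₜ τ y - I ⊗ₜ τ (I • y)) :=
  rfl

variable (σ : V →ₗ⋆[ℂ] V)

noncomputable def graphMap : RestrictScalars ℝ ℂ V →ₗ[ℝ] V × V :=
  (LinearMap.id.prod σ.realOfConjLinear) ∘ₗ (RestrictScalars.linearEquiv ℝ ℂ V).toLinearMap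

noncomputable def toProd : ℂ ⊗[ℝ] RestrictScalars ℝ ℂ V →ₗ[ℂ] V × V :=
  (graphMap σ).liftBaseChange ℂ

theorem toProd_tmul (c : ℂ) (x : V) :
    toProd σ (c ⊗ₜ[ℝ] (RestrictScalars.linearEquiv ℝ ℂ V).symm x) = (c • x, c • σ x) :=
  rfl

noncomputable def ofProd : V × V →ₗ[ℂ] ℂ ⊗[ℝ] RestrictScalars ℝ ℂ V :=
  (complexLinearLift (RestrictScalars.linearEquiv ℝ ℂ V).symm.toLinearMap).coprod
    (complexLinearLift ((RestrictScalars.linearEquiv ℝ ℂ V).symm.toLinearMap ∘ₗ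
      σ.realOfConjLinear))

variable {σ}

theorem toProd_comp_ofProd (hσ : ∀ x, σ (σ x) = x) : toProd σ ∘ₗ ofProd σ = LinearMap.id := by
  ext x <;>
  simp only [ofProd, LinearMap.coe_comp, Function.comp_apply, LinearMap.inl_apply,
    LinearMap.inr_apply, LinearMap.coprod_apply, map_zero, zero_add, add_zero,
    complexLinearLift_apply, LinearEquiv.coe_coe, LinearMap.realOfConjLinear_apply, map_smul,
    map_sub, LinearMap.map_smul_of_tower, TensorProduct.tmul_smul, toProd_tmul, map_I_smul, hσ,
    LinearMap.id_apply, Prod.smul_fst, Prod.smul_snd, Prod.fst_sub, Prod.snd_sub, Prod.smul_mk] <;>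
  match_scalars <;> norm_num [Complex.ext_iff]

theorem ofProd_comp_toProd (hσ : ∀ x, σ (σ x) = x) : ofProd σ ∘ₗ toProd σ = LinearMap.id := by
  refine (LinearMap.liftBaseChangeEquiv ℂ).symm.injective (LinearMap.ext fun x => ?_)
  obtain ⟨x, rfl⟩ := (RestrictScalars.linearEquiv ℝ ℂ V).symm.surjective x
  change ofProd σ (toProd σ (1 ⊗ₜ[ℝ] (RestrictScalars.linearEquiv ℝ ℂ V).symm x)) = 1 ⊗ₜ _
  simp only [ofProd, toProd_tmul, one_smul, LinearMap.coprod_apply, complexLinearLift_apply,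
    LinearMap.coe_comp, Function.comp_apply, LinearEquiv.coe_coe,
    LinearMap.realOfConjLinear_apply, hσ, map_I_smul, map_smul, TensorProduct.tmul_smul]
  module

noncomputable def toProdEquiv (hσ : ∀ x, σ (σ x) = x) : ℂ ⊗[ℝ] RestrictScalars ℝ ℂ V ≃ₗ[ℂ] V × V :=
  LinearEquiv.ofLinearMap (toProd σ) (ofProd σ) (toProd_comp_ofProd hσ) (ofProd_comp_toProd hσ)

end Conjugation

theorem graphMap_lie {σ : L →ₗ⋆[ℂ] L} (hσ : ∀ x y, σ ⁅x, y⁆ = ⁅σ x, σ y⁆)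
    (x y : RestrictScalars ℝ ℂ L) : graphMap σ ⁅x, y⁆ = ⁅graphMap σ x, graphMap σ y⁆ :=
  Prod.ext rfl (hσ _ _)

/-- The structural fact underlying Proposition 3.6: if L is a complex Lie
algebra and σ an antilinear involutive automorphism of L (e.g. the conjugation
with respect to a compact real form), then the ℂ-linear map from the base
change ℂ ⊗_ℝ L (complexification of L viewed as a real Lie algebra) to L × L
determined on pure tensors by c ⊗ x ↦ (c • x, c • σ(x)) is an isomorphism of
complex Lie algebras. -/
theorem baseChange_lieEquiv_prod
    (σ : L → L)
    (hadd : ∀ x y : L, σ (x + y) = σ x + σ y)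
    (hconj : ∀ (c : ℂ) (x : L), σ (c • x) = (starRingEnd ℂ) c • σ x)
    (hbracket : ∀ x y : L, σ ⁅x, y⁆ = ⁅σ x, σ y⁆)
    (hinvol : ∀ x : L, σ (σ x) = x) :
    ∃ e : (ℂ ⊗[ℝ] (RestrictScalars ℝ ℂ L)) ≃ₗ⁅ℂ⁆ (L × L),
      ∀ (c : ℂ) (x : L),
        e (c ⊗ₜ[ℝ] (x : RestrictScalars ℝ ℂ L)) = (c • x, c • σ x) := by
  let σ' : L →ₗ⋆[ℂ] L := { toFun := σ, map_add' := hadd, map_smul' := hconj }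
  let e := (graphMap σ').liftBaseChangeLieHom ℂ (graphMap_lie hbracket)
  exact ⟨LieEquiv.ofBijective e (toProdEquiv (σ := σ') hinvol).bijective, toProd_tmul σ'⟩

end ComplexificationProd
end
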